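/- arXiv:2301.01700 — 6 statements merged into one kernel-verified Lean document; each statement's English description precedes it below -/
import Mathlib

section
/- Let G = (V, E) be a connected graph that is 3-edge-connected, and let M* be the cographic matroid of G. Then M* is 3-sparse: for every S ⊆ E, |S| ≤ 3 · r_{M*}(S). -/
/-!
Let `c` be the number of components of `G - S`. Putting back `c - 1` suitably chosen edges
of `S` reconnects the graph, so `r(S) ≥ |S| - c + 1`. On the other hand, in a 3-edge-connected
graph every component of `G - S` is left by at least three edges, all of them in `S`, and every
edge leaves at most two components; double counting gives `3c ≤ 2|S|` once `c ≥ 2`. Together,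
`3 r(S) ≥ 3|S| - 2|S| = |S|`.
-/

open Finset

namespace Finset

theorem exists_subset_pair_of_card_le_two {α : Type*} [DecidableEq α] [Nonempty α] {s : Finset α}
    (hs : #s ≤ 2) : ∃ a b, s ⊆ {a, b} := by
  interval_cases h : #s
  · obtain rfl := card_eq_zero.mp h
    exact ⟨Classical.arbitrary α, Classical.arbitrary α, empty_subset _⟩
  · obtain ⟨a, rfl⟩ := card_eq_one.mp h
    exact ⟨a, a, by simp⟩
  · obtain ⟨a, b, -, rfl⟩ := card_eq_two.mp h
    exact ⟨a, b, subset_rfl⟩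

end Finset

def Sym2.Crosses {V : Type*} (X : Set V) (e : Sym2 V) : Prop :=
  ∃ a b, e = s(a, b) ∧ a ∈ X ∧ b ∉ X

namespace SimpleGraph

variable {V : Type*} {G : SimpleGraph V}

theorem Preconnected.exists_adj_mem_notMem (hG : G.Preconnected) {X : Set V} {u v : V}
    (hu : u ∈ X) (hv : v ∉ X) : ∃ a b, G.Adj a b ∧ a ∈ X ∧ b ∉ X := by
  obtain ⟨w⟩ := hG u v
  obtain ⟨d, -, ha, hb⟩ := w.exists_boundary_dart X hu hv
  exact ⟨d.fst, d.snd, d.adj, ha, hb⟩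

theorem mem_of_adj_of_not_reachable_deleteEdges {S : Set (Sym2 V)} {a b : V} (hab : G.Adj a b)
    (h : ¬ (G.deleteEdges S).Reachable a b) : s(a, b) ∈ S := by
  by_contra hS
  exact h (Adj.reachable ((deleteEdges_adj ..).mpr ⟨hab, hS⟩))

theorem Connected.exists_mem_not_reachable_deleteEdges (hG : G.Connected) {S : Set (Sym2 V)}
    (hS : ¬ (G.deleteEdges S).Connected) :
    ∃ a b, G.Adj a b ∧ s(a, b) ∈ S ∧ ¬ (G.deleteEdges S).Reachable a b := by
  have : Nonempty V := hG.nonempty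
  obtain ⟨u, v, huv⟩ : ∃ u v, ¬ (G.deleteEdges S).Reachable u v := by
    by_contra! h
    exact hS (connected_iff _ |>.mpr ⟨h, this⟩)
  obtain ⟨a, b, hab, ha, hb⟩ := hG.preconnected.exists_adj_mem_notMem
    (X := {x | (G.deleteEdges S).Reachable u x}) (Reachable.refl u) huv
  have hnab : ¬ (G.deleteEdges S).Reachable a b := fun h => hb (Reachable.trans ha h)
  exact ⟨a, b, hab, mem_of_adj_of_not_reachable_deleteEdges hab hnab, hnab⟩

open Classical in
theorem three_le_card_crosses_supp
    (h3 : ∀ e₁ e₂ : Sym2 V, (G.deleteEdges {e₁, e₂}).Connected) (S : Finset (Sym2 V))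
    {K K' : (G.deleteEdges ↑S).ConnectedComponent} (hKK' : K' ≠ K) :
    3 ≤ #{e ∈ S | Sym2.Crosses K.supp e} := by
  by_contra! hlt
  obtain ⟨u, rfl⟩ := K.exists_rep
  obtain ⟨v, rfl⟩ := K'.exists_rep
  have : Nonempty (Sym2 V) := ⟨s(u, u)⟩
  obtain ⟨e₁, e₂, hsub⟩ := exists_subset_pair_of_card_le_two (Nat.le_of_lt_succ hlt)
  obtain ⟨a, b, hab, ha, hb⟩ := (h3 e₁ e₂).preconnected.exists_adj_mem_notMem
    (X := (G.deleteEdges ↑S).connectedComponentMk u |>.supp) rfl hKK'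
  rw [deleteEdges_adj] at hab
  have hn : ¬ (G.deleteEdges ↑S).Reachable a b := fun h =>
    hb ((ConnectedComponent.eq.mpr h).symm.trans ha)
  have hcross : s(a, b) ∈ ({e₁, e₂} : Finset (Sym2 V)) :=
    hsub (mem_filter.mpr ⟨mem_of_adj_of_not_reachable_deleteEdges hab.1 hn, a, b, rfl, ha, hb⟩)
  exact hab.2 (by simpa using hcross)

open Classical in
theorem card_crosses_supp_le_two (H : SimpleGraph V) [Fintype H.ConnectedComponent]
    (e : Sym2 V) : #{K : H.ConnectedComponent | Sym2.Crosses K.supp e} ≤ 2 := by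
  induction e using Sym2.ind with
  | _ a b =>
  refine (card_le_card fun K hK => ?_).trans (card_le_two (a := H.connectedComponentMk a)
    (b := H.connectedComponentMk b))
  obtain ⟨a', b', hab, ha', -⟩ := (mem_filter.mp hK).2
  rcases Sym2.eq_iff.mp hab with ⟨rfl, rfl⟩ | ⟨rfl, rfl⟩ <;> simp_all

variable [Finite V]

theorem ConnectedComponent.card_lt_card_of_le {H H' : SimpleGraph V} (h : H ≤ H')
    {u v : V} (huv : H'.Adj u v) (hn : ¬ H.Reachable u v) :
    Nat.card H'.ConnectedComponent < Nat.card H.ConnectedComponent := by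
  refine (card_le_card_of_le h).lt_of_ne fun heq => hn ?_
  have hinj := ((surjective_map_ofLE h).bijective_of_nat_card_le heq.ge).injective
  refine ConnectedComponent.eq.mp (hinj ?_)
  simpa using ConnectedComponent.eq.mpr huv.reachable

theorem Connected.exists_subset_connected_deleteEdges (hG : G.Connected) (S : Finset (Sym2 V)) :
    ∃ A ⊆ S, (G.deleteEdges ↑A).Connected ∧
      #S + 1 ≤ #A + Nat.card (G.deleteEdges ↑S).ConnectedComponent := by
  induction S using Finset.strongInduction with
  | H S ih =>
  classical
  by_cases hS : (G.deleteEdges ↑S).Connected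
  · have := hS.nonempty
    have := Nat.card_pos (α := (G.deleteEdges ↑S).ConnectedComponent)
    exact ⟨S, subset_rfl, hS, by omega⟩
  obtain ⟨a, b, hab, habS, hn⟩ := hG.exists_mem_not_reachable_deleteEdges hS
  obtain ⟨A, hAS, hA, hcard⟩ := ih (S.erase s(a, b)) (erase_ssubset habS)
  have hlt := ConnectedComponent.card_lt_card_of_le
    (deleteEdges_anti (coe_subset.mpr (erase_subset s(a, b) S)))
    ((deleteEdges_adj ..).mpr ⟨hab, by simp⟩) hn
  have := card_erase_add_one habS
  exact ⟨A, hAS.trans (erase_subset _ _), hA, by omega⟩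

theorem three_mul_card_connectedComponent_deleteEdges_le
    (h3 : ∀ e₁ e₂ : Sym2 V, (G.deleteEdges {e₁, e₂}).Connected) (S : Finset (Sym2 V))
    (hS : 2 ≤ Nat.card (G.deleteEdges ↑S).ConnectedComponent) :
    3 * Nat.card (G.deleteEdges ↑S).ConnectedComponent ≤ 2 * #S := by
  classical
  have := Fintype.ofFinite (G.deleteEdges ↑S).ConnectedComponent
  have := Finite.one_lt_card_iff_nontrivial.mp hS
  have hdc := card_mul_le_card_mul (s := univ) (t := S) (m := 3) (n := 2)
    (fun K e => Sym2.Crosses (ConnectedComponent.supp K) e)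
    (fun K _ => three_le_card_crosses_supp h3 S (exists_ne K).choose_spec)
    (fun e _ => card_crosses_supp_le_two _ e)
  rw [card_univ, ← Nat.card_eq_fintype_card] at hdc
  omega

end SimpleGraph

open Classical in
/-- Let `G` be a connected, 3-edge-connected graph and `M*` its cographic matroid
(a set `A` of edges is independent iff deleting `A` keeps `G` connected).  Then `M*`
is `3`-sparse: `|S| ≤ 3 · r_{M*}(S)` for every edge set `S`. -/
theorem stmt_3 {V : Type*} [Fintype V] (G : SimpleGraph V) (hconn : G.Connected)
    (h3ec : ∀ e₁ e₂ : Sym2 V, (G.deleteEdges {e₁, e₂}).Connected)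
    (r : Finset (Sym2 V) → ℕ)
    (hr : ∀ S : Finset (Sym2 V),
      r S = (S.powerset.filter (fun A : Finset (Sym2 V) => (G.deleteEdges (↑A : Set (Sym2 V))).Connected)).sup Finset.card) :
    ∀ S : Finset (Sym2 V), (↑S : Set (Sym2 V)) ⊆ G.edgeSet → S.card ≤ 3 * r S := by
  intro S _
  obtain ⟨A, hAS, hA, hcard⟩ := hconn.exists_subset_connected_deleteEdges S
  have hAr : #A ≤ r S := hr S ▸ le_sup (mem_filter.mpr ⟨mem_powerset.mpr hAS, hA⟩)
  rcases le_or_gt (Nat.card (G.deleteEdges ↑S).ConnectedComponent) 1 with h1 | h2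
  · omega
  · have := G.three_mul_card_connectedComponent_deleteEdges_le h3ec S h2
    omega
end

section
/- Let M be a matroid over ground set [n] and let X_1, ..., X_n be nonnegative independent random variables. Let I_opt be a random independent set of M maximizing total weight Σ_{i∈I} X_i, and let p_i = P[i ∈ I_opt]. Then p = (p_1, ..., p_n) lies in the independent set polytope P_M, and E[max over independent sets I of Σ_{i∈I} X_i] ≤ Σ_i p_i · E[X_i | X_i ≥ F_i^{-1}(1 - p_i)], where F_i is the CDF of X_i (assuming each X_i has a continuous distribution). -/
/-!
Any random independent set `S` gives a point of `P_M`: the vector of inclusion probabilities is the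
expectation of the characteristic vector of `S`, hence lies in the closed convex hull of the
characteristic vectors of independent sets. For the bound,
`E[Σ_{i ∈ S} X_i] = Σ_i E[X_i 1_{i ∈ S}]`, and among events of a given probability the one
maximising `E[X_i 1_A]` is the upper tail `B = {q_i ≤ X_i}`: trading `A \ B` (where `X_i < q_i`)
for `B \ A` (where `X_i ≥ q_i`), two sets of equal measure, can only increase the integral.
-/

section

open MeasureTheory

variable {Ω : Type*} [MeasurableSpace Ω] {μ : Measure Ω}

theorem integral_indicator_le_integral_indicator_superlevel [IsFiniteMeasure μ] {X : Ω → ℝ}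
    (hX : Measurable X) (hXi : Integrable X μ) {A : Set Ω} (hA : MeasurableSet A) {q : ℝ}
    (hq : μ {ω | q ≤ X ω} = μ A) :
    ∫ ω, A.indicator X ω ∂μ ≤ ∫ ω, {ω | q ≤ X ω}.indicator X ω ∂μ := by
  set B := {ω | q ≤ X ω}
  have hB : MeasurableSet B := measurableSet_le measurable_const hX
  rw [integral_indicator hA, integral_indicator hB,
    ← integral_inter_add_sdiff hB hXi.integrableOn (s := A),
    ← integral_inter_add_sdiff hA hXi.integrableOn (s := B), Set.inter_comm B A]
  gcongr _ + ?_
  calc ∫ ω in A \ B, X ω ∂μ ≤ ∫ _ in A \ B, q ∂μ :=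
        setIntegral_mono_on hXi.integrableOn (integrableOn_const (measure_ne_top _ _))
          (hA.diff hB) fun ω hω => le_of_not_ge hω.2
    _ = ∫ _ in B \ A, q ∂μ := by
        simp only [setIntegral_const, measureReal_def,
          measure_sdiff_symm hA.nullMeasurableSet hB.nullMeasurableSet hq.symm (measure_ne_top _ _)]
    _ ≤ ∫ ω in B \ A, X ω ∂μ :=
        setIntegral_mono_on (integrableOn_const (measure_ne_top _ _)) hXi.integrableOn
          (hB.diff hA) fun ω hω => hω.1

theorem integral_sum_mem_eq_sum_integral_indicator {ι E : Type*} [Fintype ι]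
    [NormedAddCommGroup E] [NormedSpace ℝ E] (S : Ω → Finset ι)
    (hS : ∀ i, MeasurableSet {ω | i ∈ S ω})
    {f : ι → Ω → E} (hf : ∀ i, Integrable (f i) μ) :
    ∫ ω, ∑ i ∈ S ω, f i ω ∂μ =
      ∑ i, ∫ ω, {ω | i ∈ S ω}.indicator (f i) ω ∂μ := by
  classical
  rw [← integral_finsetSum _ fun i _ => (hf i).indicator (hS i)]
  congr with ω
  simp [Set.indicator_apply, Finset.sum_ite_mem]

theorem inclusionProb_mem_convexHull {ι : Type*} [Fintype ι] [DecidableEq ι]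
    [IsProbabilityMeasure μ] (P : Finset ι → Prop) (S : Ω → Finset ι)
    (hS : ∀ i, MeasurableSet {ω | i ∈ S ω})
    (hPS : ∀ ω, P (S ω)) :
    (fun i => μ.real {ω | i ∈ S ω}) ∈
      convexHull ℝ {x : ι → ℝ | ∃ I, P I ∧ x = fun i => if i ∈ I then 1 else 0} := by
  set v : Finset ι → ι → ℝ := fun I i => if i ∈ I then 1 else 0
  have hv : ∀ i, (fun ω => v (S ω) i) = {ω | i ∈ S ω}.indicator 1 := fun i => by
    ext ω; simp [v, Set.indicator_apply]
  have hvi : ∀ i, Integrable (fun ω => v (S ω) i) μ := fun i => by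
    rw [hv]; exact (integrable_const 1).indicator (hS i)
  have hp : (fun i => μ.real {ω | i ∈ S ω}) = ∫ ω, v (S ω) ∂μ := by
    ext i; rw [eval_integral hvi, hv, integral_indicator_one (hS i)]
  have hfin : {x : ι → ℝ | ∃ I, P I ∧ x = v I}.Finite :=
    (Set.finite_range v).subset fun x ⟨I, _, hx⟩ => ⟨I, hx.symm⟩
  rw [hp]
  exact (convex_convexHull ℝ _).integral_mem (hfin.isClosed_convexHull (𝕜 := ℝ))
    (ae_of_all _ fun ω => subset_convexHull ℝ _ ⟨S ω, hPS ω, rfl⟩) (Integrable.of_eval hvi)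

end

open MeasureTheory ProbabilityTheory in
/-- `p_i · E[X_i | X_i ≥ F_i⁻¹(1 - p_i)]` is encoded as `E[X_i · 1{q_i ≤ X_i}]`, where the
threshold `q_i` is any value with `P[q_i ≤ X_i] = p_i`. -/
theorem stmt_6_general (n : ℕ) (M : Matroid (Fin n))
    {Ω : Type*} [MeasureSpace Ω] [IsProbabilityMeasure (ℙ : Measure Ω)]
    (X : Fin n → Ω → ℝ) (hmeas : ∀ i, Measurable (X i))
    (hint : ∀ i, Integrable (X i))
    (Iopt : Ω → Finset (Fin n))
    (hImeas : ∀ i, MeasurableSet {ω | i ∈ Iopt ω})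
    (hIind : ∀ ω, M.Indep ↑(Iopt ω))
    (p : Fin n → ℝ) (hp : ∀ i, p i = (ℙ {ω | i ∈ Iopt ω}).toReal)
    (q : Fin n → ℝ) (hq : ∀ i, ℙ {ω | q i ≤ X i ω} = ℙ {ω | i ∈ Iopt ω}) :
    p ∈ convexHull ℝ {x : Fin n → ℝ | ∃ I : Finset (Fin n), M.Indep ↑I ∧
        x = fun i => if i ∈ I then 1 else 0}
    ∧ (∫ ω, ∑ i ∈ Iopt ω, X i ω) ≤
        ∑ i, ∫ ω, Set.indicator {ω' | q i ≤ X i ω'} (X i) ω := by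
  have hp' : p = fun i => (ℙ : Measure Ω).real {ω | i ∈ Iopt ω} := funext hp
  refine ⟨hp' ▸ inclusionProb_mem_convexHull _ Iopt hImeas hIind, ?_⟩
  rw [integral_sum_mem_eq_sum_integral_indicator Iopt hImeas hint]
  exact Finset.sum_le_sum fun i _ =>
    integral_indicator_le_integral_indicator_superlevel (hmeas i) (hint i) (hImeas i) (hq i)

open MeasureTheory ProbabilityTheory in
/-- Ex-ante relaxation: for a matroid `M` on `[n]` and nonnegative independent random
variables `X_1, …, X_n`, let `I_opt` be an optimal (maximum-weight) random independent set
and `p_i = P[i ∈ I_opt]`.  Then `p` lies in the independent set polytope `P_M`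
(the convex hull of characteristic vectors of independent sets), and the prophet's expected
value `E[Σ_{i ∈ I_opt} X_i]` is at most `Σ_i p_i · E[X_i ∣ X_i ≥ F_i⁻¹(1 - p_i)]`, the latter
expressed as `Σ_i E[X_i · 1_{X_i ≥ q_i}]` where `q_i` is a `(1-p_i)`-quantile of `X_i`. -/
theorem stmt_6 (n : ℕ) (M : Matroid (Fin n)) (hE : M.E = Set.univ)
    {Ω : Type*} [MeasureSpace Ω] [IsProbabilityMeasure (ℙ : Measure Ω)]
    (X : Fin n → Ω → ℝ) (hmeas : ∀ i, Measurable (X i))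
    (hnn : ∀ i ω, 0 ≤ X i ω) (hint : ∀ i, Integrable (X i))
    (hindep : iIndepFun (m := fun _ => (inferInstance : MeasurableSpace ℝ)) X ℙ)
    (Iopt : Ω → Finset (Fin n))
    (hImeas : ∀ i, MeasurableSet {ω | i ∈ Iopt ω})
    (hIind : ∀ ω, M.Indep ↑(Iopt ω))
    (hIopt : ∀ ω, ∀ I : Finset (Fin n), M.Indep ↑I →
      ∑ i ∈ I, X i ω ≤ ∑ i ∈ Iopt ω, X i ω)
    (p : Fin n → ℝ) (hp : ∀ i, p i = (ℙ {ω | i ∈ Iopt ω}).toReal)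
    (q : Fin n → ℝ) (hq : ∀ i, ℙ {ω | q i ≤ X i ω} = ℙ {ω | i ∈ Iopt ω}) :
    p ∈ convexHull ℝ {x : Fin n → ℝ | ∃ I : Finset (Fin n), M.Indep ↑I ∧
        x = fun i => if i ∈ I then 1 else 0}
    ∧ (∫ ω, ∑ i ∈ Iopt ω, X i ω) ≤
        ∑ i, ∫ ω, Set.indicator {ω' | q i ≤ X i ω'} (X i) ω :=
  stmt_6_general n M X hmeas hint Iopt hImeas hIind p hp q hq
end

section
/- Let X be a real-valued random variable with continuous cumulative distribution function F, let q ∈ (0,1], and let t = F^{-1}(1-q). Then for every event A with P[A] = q, we have E[X · 1_A] ≤ E[X · 1_{X ≥ t}]; that is, conditioning on X exceeding its (1-q)-quantile maximizes the conditional expectation over all events of probability q. -/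
/-!
The sets `A \ {t ≤ X}` and `{t ≤ X} \ A` have equal measure, since `A` and `{t ≤ X}` do.
On the first `X < t` and on the second `t ≤ X`, so trading the first for the second
cannot decrease the integral (the bathtub principle).
-/

namespace MeasureTheory

variable {α : Type*} [MeasurableSpace α] {μ : Measure α} {f : α → ℝ} {s : Set α}

theorem setIntegral_le_of_le_const_real (hs : MeasurableSet s) (hμs : μ s ≠ ⊤) {c : ℝ}
    (hf : ∀ x ∈ s, f x ≤ c) (hfint : IntegrableOn f s μ) :
    ∫ x in s, f x ∂μ ≤ c * μ.real s := by
  calc ∫ x in s, f x ∂μ ≤ ∫ _ in s, c ∂μ :=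
        setIntegral_mono_on hfint (integrableOn_const hμs) hs hf
    _ = c * μ.real s := by rw [setIntegral_const, smul_eq_mul, mul_comm]

theorem setIntegral_le_setIntegral_setOf_le (hf : Measurable f) (hfint : Integrable f μ)
    {A : Set α} (hA : MeasurableSet A) (hμA : μ A ≠ ⊤) (t : ℝ)
    (hAt : μ A = μ {x | t ≤ f x}) :
    ∫ x in A, f x ∂μ ≤ ∫ x in {x | t ≤ f x}, f x ∂μ := by
  set B := {x | t ≤ f x}
  have hB : MeasurableSet B := hf measurableSet_Ici
  have hμAB : μ (A \ B) ≠ ⊤ := measure_ne_top_of_subset Set.sdiff_subset hμA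
  have hdiff : μ (A \ B) = μ (B \ A) :=
    measure_sdiff_symm hA.nullMeasurableSet hB.nullMeasurableSet hAt
      (measure_ne_top_of_subset Set.inter_subset_left hμA)
  rw [← integral_inter_add_sdiff hB hfint.integrableOn (s := A),
    ← integral_inter_add_sdiff hA hfint.integrableOn (s := B), Set.inter_comm B A]
  gcongr (∫ x in A ∩ B, f x ∂μ) + ?_
  calc ∫ x in A \ B, f x ∂μ ≤ t * μ.real (A \ B) :=
        setIntegral_le_of_le_const_real (hA.diff hB) hμAB (fun x hx => le_of_not_ge hx.2)
          hfint.integrableOn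
    _ = t * μ.real (B \ A) := by rw [Measure.real, Measure.real, hdiff]
    _ ≤ ∫ x in B \ A, f x ∂μ :=
        setIntegral_ge_of_const_le_real (hB.diff hA) (hdiff ▸ hμAB) (fun x hx => hx.1)
          hfint.integrableOn

end MeasureTheory

open MeasureTheory ProbabilityTheory in
theorem stmt_7_general {Ω : Type*} [MeasureSpace Ω] [IsProbabilityMeasure (ℙ : Measure Ω)]
    (X : Ω → ℝ) (hX : Measurable X) (hint : Integrable X)
    (q : ℝ)
    (t : ℝ) (ht : ℙ {ω | t ≤ X ω} = ENNReal.ofReal q)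
    (A : Set Ω) (hA : MeasurableSet A) (hAq : ℙ A = ENNReal.ofReal q) :
    (∫ ω, A.indicator X ω) ≤ ∫ ω, Set.indicator {ω | t ≤ X ω} X ω := by
  have hB : MeasurableSet {ω | t ≤ X ω} := hX measurableSet_Ici
  rw [integral_indicator hA, integral_indicator hB]
  exact setIntegral_le_setIntegral_setOf_le hX hint hA (measure_ne_top _ _) t (hAq.trans ht.symm)

open MeasureTheory ProbabilityTheory in
/-- For an integrable random variable `X` with continuous CDF, `q ∈ (0,1]`, and
`t = F⁻¹(1-q)` a `(1-q)`-quantile (i.e. `P[X ≥ t] = q`), every event `A` with `P[A] = q`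
satisfies `E[X · 1_A] ≤ E[X · 1_{X ≥ t}]`: conditioning on `X` exceeding its
`(1-q)`-quantile maximizes the conditional expectation over events of probability `q`. -/
theorem stmt_7 {Ω : Type*} [MeasureSpace Ω] [IsProbabilityMeasure (ℙ : Measure Ω)]
    (X : Ω → ℝ) (hX : Measurable X) (hint : Integrable X)
    (q : ℝ) (hq0 : 0 < q) (hq1 : q ≤ 1)
    (t : ℝ) (ht : ℙ {ω | t ≤ X ω} = ENNReal.ofReal q)
    (A : Set Ω) (hA : MeasurableSet A) (hAq : ℙ A = ENNReal.ofReal q) :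
    (∫ ω, A.indicator X ω) ≤ ∫ ω, Set.indicator {ω | t ≤ X ω} X ω :=
  stmt_7_general X hX hint q t ht A hA hAq
end

section
/- Let M be a k-column sparse matroid represented by φ : E → 𝔽^d, let G be the hypergraph with vertex set [d] and hyperedges e_t = {i : φ(t)_i ≠ 0} for t ∈ E (each with at most k vertices and at least one vertex), and let p be a point in the independent set polytope P_M. Then there exists an orientation assigning each hyperedge e_t a head vertex in e_t, such that for every vertex i ∈ [d], the sum of p_t over hyperedges with head i is at most k. -/
open Finset Classical in
private lemma card_supported_le {E 𝔽 : Type*} [Field 𝔽] [Fintype E] {d : ℕ}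
    (φ : E → Fin d → 𝔽) (I : Finset E)
    (hI : LinearIndependent 𝔽 (fun t : ↥I => φ ↑t)) (S : Finset (Fin d)) :
    (I.filter (fun t => ∀ i, φ t i ≠ 0 → i ∈ S)).card ≤ S.card := by
  set J := I.filter (fun t => ∀ i, φ t i ≠ 0 → i ∈ S) with hJdef
  have hJI : J ⊆ I := filter_subset _ _
  have hJli : LinearIndependent 𝔽
      ((fun t : ↥I => φ ↑t) ∘ (fun t : ↥J => (⟨↑t, hJI t.2⟩ : ↥I))) :=
    hI.comp _ (fun a b hab => Subtype.ext (Subtype.mk_eq_mk.mp hab))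
  have hli : LinearIndependent 𝔽 (fun t : ↥J => (fun i : ↥S => φ ↑t ↑i)) := by
    rw [Fintype.linearIndependent_iff]
    intro c hc
    have hv : ∑ t : ↥J, c t •
        ((fun t : ↥I => φ ↑t) ∘ (fun t : ↥J => (⟨↑t, hJI t.2⟩ : ↥I))) t = 0 := by
      funext i
      by_cases hiS : i ∈ S
      · have := congrFun hc ⟨i, hiS⟩
        simpa [Finset.sum_apply] using this
      · simp only [Finset.sum_apply, Pi.smul_apply, Pi.zero_apply, smul_eq_mul,
          Function.comp_apply]
        apply Finset.sum_eq_zero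
        intro t _
        have hz : φ (↑t : E) i = 0 := by
          by_contra h
          exact hiS ((mem_filter.mp t.2).2 i h)
        simp [hz]
    exact Fintype.linearIndependent_iff.mp hJli c hv
  have hcard := hli.fintype_card_le_finrank
  simpa [Module.finrank_pi, Fintype.card_coe] using hcard

open Finset in
private lemma orient_aux {E : Type*} [Fintype E] {d k : ℕ} [Nonempty (Fin d)]
    (sup : E → Finset (Fin d)) (p : E → ℝ)
    (hpos : ∀ t, 0 ≤ p t) (hk : ∀ t, (sup t).card ≤ k)
    (hbound : ∀ S : Finset (Fin d),
      ∑ t ∈ Finset.univ.filter (fun t => sup t ⊆ S), p t ≤ (S.card : ℝ)) :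
    ∀ n (V : Finset (Fin d)), V.card ≤ n → ∀ T : Finset E, (∀ t ∈ T, sup t ⊆ V) →
      (∀ t ∈ T, (sup t).Nonempty) →
      ∃ head : E → Fin d, (∀ t ∈ T, head t ∈ sup t) ∧
        ∀ i, ∑ t ∈ T.filter (fun t => head t = i), p t ≤ (k : ℝ) := by
  classical
  intro n
  induction n with
  | zero =>
    intro V hV T hT hTne
    have hVe : V = ∅ := card_eq_zero.mp (Nat.le_zero.mp hV)
    have hTe : T = ∅ := by
      by_contra h
      obtain ⟨t, ht⟩ := nonempty_iff_ne_empty.mpr h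
      obtain ⟨i, hi⟩ := hTne t ht
      have := hT t ht hi
      simp [hVe] at this
    refine ⟨fun _ => Classical.arbitrary _, ?_, ?_⟩ <;> simp [hTe]
  | succ n ih =>
    intro V hV T hT hTne
    rcases V.eq_empty_or_nonempty with rfl | hVne
    · have hTe : T = ∅ := by
        by_contra h
        obtain ⟨t, ht⟩ := nonempty_iff_ne_empty.mpr h
        obtain ⟨i, hi⟩ := hTne t ht
        have := hT t ht hi
        simp at this
      refine ⟨fun _ => Classical.arbitrary _, ?_, ?_⟩ <;> simp [hTe]
    · -- find a low-load vertex
      have hTsum : ∑ t ∈ T, p t ≤ (V.card : ℝ) := by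
        refine le_trans ?_ (hbound V)
        apply Finset.sum_le_sum_of_subset_of_nonneg
        · intro t ht
          simp only [mem_filter, mem_univ, true_and]
          exact hT t ht
        · intro t _ _; exact hpos t
      have hswap : ∑ i ∈ V, ∑ t ∈ T.filter (fun t => i ∈ sup t), p t
          ≤ ∑ i ∈ V, (k : ℝ) := by
        have e1 : ∑ i ∈ V, ∑ t ∈ T.filter (fun t => i ∈ sup t), p t
            = ∑ t ∈ T, ((sup t ∩ V).card : ℝ) * p t := by
          simp only [Finset.sum_filter]
          rw [Finset.sum_comm]
          refine Finset.sum_congr rfl fun t _ => ?_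
          rw [← Finset.sum_filter]
          have : V.filter (fun i => i ∈ sup t) = sup t ∩ V := by
            ext i; simp [Finset.mem_inter, and_comm]
          rw [Finset.sum_const, this]
          simp [mul_comm]
        rw [e1, Finset.sum_const, nsmul_eq_mul]
        calc ∑ t ∈ T, ((sup t ∩ V).card : ℝ) * p t
            ≤ ∑ t ∈ T, (k : ℝ) * p t := by
              refine Finset.sum_le_sum fun t _ => ?_
              refine mul_le_mul_of_nonneg_right ?_ (hpos t)
              exact_mod_cast le_trans (Finset.card_le_card (Finset.inter_subset_left)) (hk t)
          _ = (k : ℝ) * ∑ t ∈ T, p t := by rw [Finset.mul_sum]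
          _ ≤ (k : ℝ) * (V.card : ℝ) := by
              exact mul_le_mul_of_nonneg_left hTsum (by positivity)
          _ = (V.card : ℝ) * (k : ℝ) := mul_comm _ _
      obtain ⟨i, hiV, hi⟩ := Finset.exists_le_of_sum_le hVne hswap
      -- split T
      set T2 := T.filter (fun t => i ∉ sup t) with hT2
      have hT2sub : ∀ t ∈ T2, sup t ⊆ V.erase i := by
        intro t ht
        rw [Finset.subset_erase]
        exact ⟨hT t (Finset.mem_of_mem_filter t ht), (mem_filter.mp ht).2⟩
      have hcard : (V.erase i).card ≤ n := by
        have := Finset.card_erase_of_mem hiV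
        omega
      obtain ⟨head', hh1, hh2⟩ := ih (V.erase i) hcard T2 hT2sub
        (fun t ht => hTne t (Finset.mem_of_mem_filter t ht))
      refine ⟨fun t => if i ∈ sup t then i else head' t, ?_, ?_⟩
      · intro t ht
        by_cases h : i ∈ sup t
        · simp [h]
        · have : t ∈ T2 := mem_filter.mpr ⟨ht, h⟩
          simpa [h] using hh1 t this
      · intro j
        by_cases hj : j = i
        · subst hj
          have hfe : T.filter (fun t => (if j ∈ sup t then j else head' t) = j)
              = T.filter (fun t => j ∈ sup t) := by
            ext t
            simp only [mem_filter]
            constructor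
            · rintro ⟨ht, hh⟩
              refine ⟨ht, ?_⟩
              by_contra h
              rw [if_neg h] at hh
              have ht2 : t ∈ T2 := mem_filter.mpr ⟨ht, h⟩
              have := hT2sub t ht2 (hh ▸ hh1 t ht2)
              exact absurd this (Finset.notMem_erase j V)
            · rintro ⟨ht, hh⟩
              exact ⟨ht, by rw [if_pos hh]⟩
          rw [hfe]
          exact hi
        · have hfe : T.filter (fun t => (if i ∈ sup t then i else head' t) = j)
              = T2.filter (fun t => head' t = j) := by
            ext t
            simp only [hT2, Finset.filter_filter, mem_filter]
            constructor
            · rintro ⟨ht, hh⟩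
              by_cases h : i ∈ sup t
              · rw [if_pos h] at hh; exact absurd hh.symm hj
              · rw [if_neg h] at hh; exact ⟨ht, h, hh⟩
            · rintro ⟨ht, h, hh⟩
              exact ⟨ht, by rw [if_neg h]; exact hh⟩
          rw [hfe]
          exact hh2 j

open Classical in
/-- For a `k`-column sparse matroid represented by `φ : E → 𝔽^d` (no zero columns, each
column with at most `k` nonzero entries) and a point `p` in its independent set polytope
(the convex hull of characteristic vectors of independent sets), there is an orientation
assigning each hyperedge `e_t = {i : φ(t)_i ≠ 0}` a head vertex in `e_t` such that for
every vertex `i ∈ [d]` the sum of `p_t` over hyperedges with head `i` is at most `k`. -/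
theorem stmt_9 {E 𝔽 : Type*} [Field 𝔽] [Fintype E] (d k : ℕ)
    (φ : E → Fin d → 𝔽)
    (hnz : ∀ e : E, φ e ≠ 0)
    (hsp : ∀ e : E, (Finset.univ.filter (fun i => φ e i ≠ 0)).card ≤ k)
    (p : E → ℝ)
    (hp : p ∈ convexHull ℝ {x : E → ℝ | ∃ I : Finset E,
        LinearIndependent 𝔽 (fun t : ↥I => φ ↑t) ∧ x = fun e => if e ∈ I then 1 else 0}) :
    ∃ head : E → Fin d, (∀ t : E, φ t (head t) ≠ 0) ∧
      ∀ i : Fin d, ∑ t ∈ Finset.univ.filter (fun t => head t = i), p t ≤ (k : ℝ) := by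
  classical
  cases isEmpty_or_nonempty E with
  | inl h =>
    exact ⟨fun t => isEmptyElim t, fun t => isEmptyElim t, fun i => by simp⟩
  | inr h =>
    have hd : Nonempty (Fin d) := by
      obtain ⟨e⟩ := h
      rcases Function.ne_iff.mp (hnz e) with ⟨i, _⟩
      exact ⟨i⟩
    set sup : E → Finset (Fin d) := fun t => Finset.univ.filter (fun i => φ t i ≠ 0)
      with hsupdef
    have hsub : ∀ (t : E) (S : Finset (Fin d)),
        sup t ⊆ S ↔ ∀ i, φ t i ≠ 0 → i ∈ S := by
      intro t S
      simp [hsupdef, Finset.subset_iff]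
    have hpos : ∀ t, 0 ≤ p t := by
      have : convexHull ℝ {x : E → ℝ | ∃ I : Finset E,
          LinearIndependent 𝔽 (fun t : ↥I => φ ↑t) ∧ x = fun e => if e ∈ I then 1 else 0}
          ⊆ {x : E → ℝ | ∀ t, 0 ≤ x t} := by
        apply convexHull_min
        · rintro x ⟨I, _, rfl⟩ t
          by_cases h : t ∈ I <;> simp [h]
        · intro x hx y hy a b ha hb hab t
          have := add_nonneg (mul_nonneg ha (hx t)) (mul_nonneg hb (hy t))
          simpa using this
      exact this hp
    have hbound : ∀ S : Finset (Fin d),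
        ∑ t ∈ Finset.univ.filter (fun t => sup t ⊆ S), p t ≤ (S.card : ℝ) := by
      intro S
      have : convexHull ℝ {x : E → ℝ | ∃ I : Finset E,
          LinearIndependent 𝔽 (fun t : ↥I => φ ↑t) ∧ x = fun e => if e ∈ I then 1 else 0}
          ⊆ {x : E → ℝ | ∑ t ∈ Finset.univ.filter (fun t => sup t ⊆ S), x t ≤ (S.card : ℝ)} := by
        apply convexHull_min
        · rintro x ⟨I, hI, rfl⟩
          show ∑ t ∈ Finset.univ.filter (fun t => sup t ⊆ S),
              (if t ∈ I then (1:ℝ) else 0) ≤ (S.card : ℝ)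
          rw [Finset.sum_ite_mem]
          rw [Finset.sum_const, nsmul_eq_mul, mul_one]
          have heq : (Finset.univ.filter (fun t => sup t ⊆ S)) ∩ I
              = I.filter (fun t => ∀ i, φ t i ≠ 0 → i ∈ S) := by
            ext t
            simp [Finset.mem_inter, hsub, and_comm]
          rw [heq]
          exact_mod_cast card_supported_le φ I hI S
        · exact convex_halfSpace_le
            ⟨fun x y => by simp [Finset.sum_add_distrib],
             fun c x => by simp [Finset.mul_sum]⟩ _
      exact this hp
    have hne : ∀ t : E, (sup t).Nonempty := by
      intro t
      rcases Function.ne_iff.mp (hnz t) with ⟨i, hi⟩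
      have hi' : φ t i ≠ 0 := by simpa using hi
      exact ⟨i, by simp [hsupdef, hi']⟩
    obtain ⟨head, h1, h2⟩ := orient_aux sup p hpos (fun t => hsp t) hbound d
      Finset.univ (by simp) Finset.univ (fun t _ => Finset.subset_univ _)
      (fun t _ => hne t)
    refine ⟨head, fun t => ?_, fun i => h2 i⟩
    have := h1 t (Finset.mem_univ t)
    simpa [hsupdef] using this
end

section
/- Let M be a matroid with ground set E, let x ∈ E be an element that is neither a loop nor a free element (coloop) of M, let N = M \ x (deletion) and M' = M / x (contraction) on ground set E \ {x}. Fix a weight function w : E \ {x} → ℝ_{≥0} and a linear order on E \ {x}. If the greedy algorithm (processing elements in order, accepting an element iff it keeps the current selection independent) is run with respect to N and with respect to M', then the set selected under N contains the set selected under M'. -/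
/-!
Couple the two greedy runs: if `T` is the current selection for `M / x` and `S` the one for
`M \ x`, then `T ⊆ S ⊆ cl (T + x)` is preserved by every step. An element accepted by the
contraction lies outside `cl (T + x) ⊇ cl S`, so the deletion accepts it too; an element
rejected by the contraction lies in `cl (T + x)`, so accepting it for the deletion keeps
`S` inside that closure.
-/

open Set

open scoped Classical

namespace Matroid

variable {α : Type*} {M : Matroid α} {x a : α}

lemma Indep.insert_indep_of_subset_closure {I S : Set α} (hS : M.Indep S)
    (hSI : S ⊆ M.closure I) (haI : M.Indep (insert a I)) (ha : a ∉ I) :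
    M.Indep (insert a S) := by
  have hI : M.Indep I := haI.subset (subset_insert a I)
  obtain ⟨haE, hacl⟩ := (hI.insert_indep_iff_of_notMem ha).1 haI
  exact hS.insert_indep_iff.2
    (Or.inl ⟨haE, fun h ↦ hacl (M.closure_subset_closure_of_subset_closure hSI h)⟩)

noncomputable def greedyStep (P : Finset α → Prop) (S : Finset α) (a : α) : Finset α :=
  if P (insert a S) then insert a S else S

structure GreedyCoupling (M : Matroid α) (x : α) (T S : Finset α) : Prop where
  notMem : x ∉ T
  indep_insert : M.Indep (insert x (T : Set α))
  indep : M.Indep (S : Set α)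
  subset : T ⊆ S
  subset_closure : (S : Set α) ⊆ M.closure (insert x T)

namespace GreedyCoupling

variable {T S : Finset α}

lemma empty (hx : M.Indep {x}) : GreedyCoupling M x ∅ ∅ where
  notMem := Finset.notMem_empty x
  indep_insert := by simpa using hx
  indep := by simp
  subset := subset_rfl
  subset_closure := by simp

lemma insert_of_contract_accepts (h : GreedyCoupling M x T S)
    (hc : x ∉ insert a T ∧ M.Indep (insert x ((insert a T : Finset α) : Set α))) :
    GreedyCoupling M x (insert a T) (insert a S) := by
  obtain ⟨hxaT, hind⟩ := hc
  have hax : a ≠ x := fun hax ↦ hxaT (hax ▸ Finset.mem_insert_self a T)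
  have hSa : M.Indep (insert a (S : Set α)) := by
    by_cases haS : a ∈ S
    · simpa [haS] using h.indep
    refine h.indep.insert_indep_of_subset_closure h.subset_closure ?_ ?_
    · simpa [Set.insert_comm] using hind
    · rintro (rfl | haT)
      exacts [hax rfl, haS (h.subset haT)]
  have hground : insert x ((insert a T : Finset α) : Set α) ⊆ M.E := hind.subset_ground
  refine ⟨hxaT, hind, by simpa using hSa, Finset.insert_subset_insert a h.subset, ?_⟩
  rw [Finset.coe_insert, insert_subset_iff]
  refine ⟨M.subset_closure _ hground (by simp), ?_⟩
  exact h.subset_closure.trans (M.closure_subset_closure (by simp [Set.insert_subset_insert]))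

lemma mem_closure_of_contract_rejects (h : GreedyCoupling M x T S) (haE : a ∈ M.E)
    (hc : ¬ (x ∉ insert a T ∧ M.Indep (insert x ((insert a T : Finset α) : Set α)))) :
    a ∈ M.closure (insert x T) := by
  refine h.indep_insert.mem_closure_iff'.2 ⟨haE, fun hind ↦ ?_⟩
  by_contra haT
  have hxaT : x ∉ insert a T := by
    simp only [Finset.mem_insert, not_or]
    exact ⟨fun hxa ↦ haT (hxa ▸ mem_insert x _), h.notMem⟩
  exact hc ⟨hxaT, by simpa [Set.insert_comm] using hind⟩

lemma insert_right (h : GreedyCoupling M x T S) (hS : M.Indep ((insert a S : Finset α) : Set α))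
    (ha : a ∈ M.closure (insert x T)) : GreedyCoupling M x T (insert a S) := by
  refine ⟨h.notMem, h.indep_insert, hS, h.subset.trans (Finset.subset_insert a S), ?_⟩
  rw [Finset.coe_insert, insert_subset_iff]
  exact ⟨ha, h.subset_closure⟩

lemma step (h : GreedyCoupling M x T S) (a : α) :
    GreedyCoupling M x (Matroid.greedyStep (fun S ↦ x ∉ S ∧ M.Indep (insert x (S : Set α))) T a)
      (Matroid.greedyStep (fun S ↦ M.Indep (S : Set α)) S a) := by
  unfold Matroid.greedyStep
  split_ifs with hc hd hd
  · exact h.insert_of_contract_accepts hc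
  · exact absurd (h.insert_of_contract_accepts hc).indep hd
  · exact h.insert_right hd (h.mem_closure_of_contract_rejects (hd.subset_ground (Finset.mem_coe.2 (Finset.mem_insert_self a S))) hc)
  · exact h

lemma foldl (h : GreedyCoupling M x T S) (l : List α) :
    GreedyCoupling M x
      (l.foldl (Matroid.greedyStep fun S ↦ x ∉ S ∧ M.Indep (insert x (S : Set α))) T)
      (l.foldl (Matroid.greedyStep fun S ↦ M.Indep (S : Set α)) S) := by
  induction l generalizing T S with
  | nil => exact h
  | cons a l ih => exact ih (h.step a)

end GreedyCoupling

end Matroid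

open Classical in
theorem stmt_12_general {α : Type*} (M : Matroid α) (x : α)
    (hnotloop : M.Indep {x})
    (l : List α)
    (greedy : (Finset α → Prop) → List α → Finset α)
    (hgreedy : ∀ (P : Finset α → Prop) (L : List α),
      greedy P L = L.foldl (fun S a => if P (insert a S) then insert a S else S) ∅) :
    greedy (fun S => x ∉ S ∧ M.Indep (insert x ↑S)) l
      ⊆ greedy (fun S => M.Indep ↑S) l := by
  rw [hgreedy, hgreedy]
  exact ((Matroid.GreedyCoupling.empty hnotloop).foldl l).subset

open Classical in
/-- Greedy monotonicity under contraction vs deletion.  Let `x` be neither a loop nor a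
coloop of the matroid `M`, and fix an ordering (a duplicate-free list `l` avoiding `x`) of
the remaining elements together with nonnegative weights.  Running the greedy algorithm
(accept an element iff it keeps the selection independent) with respect to the deletion
`M \ x` (independence: independent in `M`) and with respect to the contraction `M / x`
(independence: the set together with `x` is independent in `M`), the set selected under
the deletion contains the set selected under the contraction. -/
theorem stmt_12 {α : Type*} (M : Matroid α) (x : α) (hxE : x ∈ M.E)
    (hnotloop : M.Indep {x}) (hnotcoloop : ∃ B : Set α, M.IsBase B ∧ x ∉ B)
    (w : α → ℝ) (hw : ∀ a, 0 ≤ w a)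
    (l : List α) (hnd : l.Nodup) (hxl : x ∉ l) (hlE : ∀ a ∈ l, a ∈ M.E)
    (greedy : (Finset α → Prop) → List α → Finset α)
    (hgreedy : ∀ (P : Finset α → Prop) (L : List α),
      greedy P L = L.foldl (fun S a => if P (insert a S) then insert a S else S) ∅) :
    greedy (fun S => x ∉ S ∧ M.Indep (insert x ↑S)) l
      ⊆ greedy (fun S => M.Indep ↑S) l :=
  stmt_12_general M x hnotloop l greedy hgreedy
end

section
/- Let M be a matroid with ground set E, x ∈ E neither a loop nor a coloop, N = M \ x and M' = M / x. Let w : E \ {x} → ℝ_{≥0} be weights and let I be a maximum-weight independent set of N with unique circuit C of I ∪ {x} in M (which contains x). If |C| ≥ 3 then the maximum weight of an independent set in M' is at least w(I)/2. -/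
/-!
Removing from `I ∪ {x}` any element `y ≠ x` of its unique circuit `C` leaves an independent set,
so `I \ {y}` is independent in `M / x`. Taking `y` of minimum weight in `C \ {x}`, which has at
least two elements, gives `w(y) ≤ w(C \ {x}) / 2 ≤ w(I) / 2`.
-/

open Set

namespace Matroid

variable {α : Type*} {M : Matroid α}

lemma IsCircuit.indep_insert_sdiff_singleton {C I : Set α} {e y : α} (hC : M.IsCircuit C)
    (hI : M.Indep I) (hCI : C ⊆ insert e I) (hy : y ∈ C) : M.Indep (insert e I \ {y}) := by
  obtain hCsubI | ⟨heC, hCeI⟩ := subset_insert_iff.1 hCI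
  · exact (hC.not_indep (hI.subset hCsubI)).elim
  have heI : e ∉ I := fun heI ↦ hC.not_indep (hI.subset (hCI.trans (insert_eq_of_mem heI).subset))
  have hecl : e ∈ M.closure I :=
    M.closure_subset_closure hCeI (hC.mem_closure_sdiff_singleton_of_mem heC)
  rw [← hI.mem_fundCircuit_iff hecl heI, ← hC.eq_fundCircuit_of_subset hI hCI]
  exact hy

lemma isCircuit_coe_of_forall_ssubset {C : Finset α} (hC : 2 ≤ C.card) (hCdep : ¬ M.Indep ↑C)
    (hCmin : ∀ D : Finset α, D ⊂ C → M.Indep ↑D) : M.IsCircuit ↑C := by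
  classical
  refine isCircuit_iff_forall_ssubset.2 ⟨⟨hCdep, fun a ha ↦ ?_⟩, fun D hDC ↦ ?_⟩
  · obtain ⟨b, hbC, hba⟩ := Finset.exists_mem_ne hC a
    exact (hCmin _ (Finset.erase_ssubset hbC)).subset_ground (by simp [hba.symm, ha])
  · obtain ⟨D, rfl⟩ := ((C.finite_toSet).subset hDC.subset).exists_finset_coe
    exact hCmin D (Finset.coe_ssubset.1 hDC)

end Matroid

namespace Finset

variable {ι K : Type*} [DecidableEq ι] [Field K] [LinearOrder K] [IsStrictOrderedRing K]

lemma sum_div_two_le_sum_erase_of_le {s t : Finset ι} {w : ι → K} {y : ι} (hst : s ⊆ t)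
    (hs : 2 ≤ s.card) (hw : ∀ a ∈ t, 0 ≤ w a) (hy : y ∈ s) (hmin : ∀ z ∈ s, w y ≤ w z) :
    (∑ e ∈ t, w e) / 2 ≤ ∑ e ∈ t.erase y, w e := by
  have hwy : 2 * w y ≤ ∑ e ∈ t, w e :=
    calc 2 * w y ≤ s.card • w y := by
          rw [nsmul_eq_mul]; gcongr
          · exact hw y (hst hy)
          · exact_mod_cast hs
      _ ≤ ∑ e ∈ s, w e := card_nsmul_le_sum s w (w y) hmin
      _ ≤ ∑ e ∈ t, w e := sum_le_sum_of_subset_of_nonneg hst fun a ha _ ↦ hw a ha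
  rw [← add_sum_erase t w (hst hy)] at hwy ⊢
  linarith

end Finset

theorem stmt_13_general {α : Type*} (M : Matroid α) (x : α) (w : α → ℝ) (hw : ∀ a, 0 ≤ w a)
    (I : Finset α) (hxI : x ∉ I) (hI : M.Indep ↑I)
    (C : Finset α) (hxC : x ∈ C) (hCI : ↑C ⊆ insert x (↑I : Set α))
    (hCdep : ¬ M.Indep ↑C) (hCmin : ∀ D : Finset α, D ⊂ C → M.Indep ↑D)
    (hC3 : 3 ≤ C.card) :
    ∃ J : Finset α, x ∉ J ∧ M.Indep (insert x (↑J : Set α)) ∧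
      (∑ e ∈ I, w e) / 2 ≤ ∑ e ∈ J, w e := by
  classical
  have hCx : 2 ≤ (C.erase x).card := by rw [Finset.card_erase_of_mem hxC]; omega
  have hCxI : C.erase x ⊆ I := fun a ha ↦ by
    simpa [(Finset.mem_erase.1 ha).1] using hCI (Finset.mem_of_mem_erase ha)
  obtain ⟨y, hyC, hymin⟩ := (C.erase x).exists_min_image w (Finset.card_pos.1 (by omega))
  have hC : M.IsCircuit ↑C := Matroid.isCircuit_coe_of_forall_ssubset (by omega) hCdep hCmin
  have hJ : M.Indep (insert x ↑I \ {y}) :=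
    hC.indep_insert_sdiff_singleton hI hCI (Finset.mem_of_mem_erase hyC)
  rw [← insert_sdiff_singleton_comm (Finset.ne_of_mem_erase hyC).symm, ← Finset.coe_erase] at hJ
  exact ⟨I.erase y, fun h ↦ hxI (Finset.mem_of_mem_erase h), hJ,
    Finset.sum_div_two_le_sum_erase_of_le hCxI hCx (fun a _ ↦ hw a) hyC hymin⟩

/-- Let `x` be neither a loop nor a coloop of a matroid `M` on ground set `E`, and let `I`
be a maximum-weight independent set of the deletion `M \ x` for nonnegative weights `w`.
Suppose `C ⊆ I ∪ {x}` is the circuit of `I ∪ {x}` in `M` (a minimal dependent set)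
containing `x`, and `|C| ≥ 3`.  Then there is an independent set of the contraction
`M / x` (i.e. a set `J` with `x ∉ J` and `J ∪ {x}` independent in `M`) of weight at least
`w(I)/2`. -/
theorem stmt_13 {α : Type*} [Fintype α] (M : Matroid α) (hE : M.E = Set.univ)
    (x : α) (hnotloop : M.Indep {x}) (hnotcoloop : ∃ B : Set α, M.IsBase B ∧ x ∉ B)
    (w : α → ℝ) (hw : ∀ a, 0 ≤ w a)
    (I : Finset α) (hxI : x ∉ I) (hI : M.Indep ↑I)
    (hImax : ∀ J : Finset α, x ∉ J → M.Indep ↑J → ∑ e ∈ J, w e ≤ ∑ e ∈ I, w e)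
    (C : Finset α) (hxC : x ∈ C) (hCI : ↑C ⊆ insert x (↑I : Set α))
    (hCdep : ¬ M.Indep ↑C) (hCmin : ∀ D : Finset α, D ⊂ C → M.Indep ↑D)
    (hC3 : 3 ≤ C.card) :
    ∃ J : Finset α, x ∉ J ∧ M.Indep (insert x (↑J : Set α)) ∧
      (∑ e ∈ I, w e) / 2 ≤ ∑ e ∈ J, w e :=
  stmt_13_general M x w hw I hxI hI C hxC hCI hCdep hCmin hC3
end
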